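/- Let v : ℝ → ℝ be twice continuously differentiable, 2π-periodic and everywhere positive, and define G : ℝ² → ℝ by G(w) = r²/v(θ)² whenever w = r·(cos θ, sin θ) with r > 0 (and G(0) = 0). For w = r·(cos θ, sin θ) with r > 0, the fundamental tensor g_w(u₁,u₂) := (1/2)·∂²/∂s∂t [G(w + s·u₁ + t·u₂)]|_{s=t=0} evaluated on the standard basis vector e₂ = (0,1) satisfies g_w(e₂, e₂) = (1/v(θ)²)·(1 − sin(2θ)·v'(θ)/v(θ) + cos²θ·(3·v'(θ)²/v(θ)² − v''(θ)/v(θ))). -/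

import Mathlib

/-- The fundamental tensor of `G = F²` at `w`, evaluated on `u₁, u₂`:
`g_w(u₁,u₂) = (1/2) ∂²/∂s∂t [G(w + s u₁ + t u₂)] |_{s=t=0}`. -/
noncomputable def fundTensor (G : ℝ × ℝ → ℝ) (w u₁ u₂ : ℝ × ℝ) : ℝ :=
  (1 / 2) * deriv (fun s : ℝ => deriv (fun t : ℝ => G (w + s • u₁ + t • u₂)) 0) 0

/-!
Rotating by `-θ`, the point `(r cos θ, r sin θ) + t e₂` becomes `(r + t sin θ, t cos θ)`, which lies
in the right half-plane for small `t`. There `θ + arctan (t cos θ / (r + t sin θ))` is a smooth choice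
of its polar angle, so along the vertical line `G` is the explicit quotient
`‖w + t e₂‖² / v(angle t)²`, whose second derivative at `t = 0` follows from the chain rule.
-/

open Real Filter Topology

lemma fundTensor_self (G : ℝ × ℝ → ℝ) (w u : ℝ × ℝ) :
    fundTensor G w u u = (1 / 2) * deriv (deriv fun t : ℝ => G (w + t • u)) 0 := by
  have h (s : ℝ) :
      deriv (fun t : ℝ => G (w + s • u + t • u)) 0 = deriv (fun t : ℝ => G (w + t • u)) s := by
    simp_rw [add_assoc, ← add_smul]
    rw [deriv_comp_const_add (f := fun t : ℝ => G (w + t • u)), add_zero]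
  rw [fundTensor, funext h]

lemma sqrt_mul_cos_sin_add_arctan (θ x y : ℝ) (hx : 0 < x) :
    √(x ^ 2 + y ^ 2) * cos (θ + arctan (y / x)) = x * cos θ - y * sin θ ∧
      √(x ^ 2 + y ^ 2) * sin (θ + arctan (y / x)) = x * sin θ + y * cos θ := by
  have hR : √(x ^ 2 + y ^ 2) = x * √(1 + (y / x) ^ 2) := by
    rw [← sqrt_sq hx.le, ← sqrt_mul (sq_nonneg x), sqrt_sq hx.le]
    congr 1
    field_simp
  have hs : √(1 + (y / x) ^ 2) ≠ 0 := by positivity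
  rw [cos_add, sin_add, cos_arctan, sin_arctan, hR]
  constructor <;> field_simp

namespace VerticalLine

variable (r θ t : ℝ)

/-- The polar angle of `(r cos θ, r sin θ + t)` while `0 < r + t sin θ`. -/
noncomputable def angle : ℝ := θ + arctan (t * cos θ / (r + t * sin θ))

noncomputable def sqNorm : ℝ := r ^ 2 + 2 * r * t * sin θ + t ^ 2

noncomputable def polarG (v : ℝ → ℝ) (r θ t : ℝ) : ℝ := sqNorm r θ t / v (angle r θ t) ^ 2

lemma sqNorm_eq : sqNorm r θ t = (r + t * sin θ) ^ 2 + (t * cos θ) ^ 2 := by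
  unfold sqNorm; linear_combination t ^ 2 * (sin_sq_add_cos_sq θ).symm

variable {r θ t} {v : ℝ → ℝ}

lemma sqNorm_pos (h : r + t * sin θ ≠ 0) : 0 < sqNorm r θ t := by
  rw [sqNorm_eq]; positivity

lemma apply_eq_polarG {G : ℝ × ℝ → ℝ}
    (hG : ∀ ρ φ : ℝ, 0 < ρ → G (ρ * cos φ, ρ * sin φ) = ρ ^ 2 / v φ ^ 2)
    (h : 0 < r + t * sin θ) : G (r * cos θ, r * sin θ + t) = polarG v r θ t := by
  obtain ⟨hc, hs⟩ := sqrt_mul_cos_sin_add_arctan θ _ (t * cos θ) h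
  have hN := sqNorm_eq r θ t
  have hpolar := hG _ (angle r θ t) (sqrt_pos.mpr (hN ▸ sqNorm_pos h.ne'))
  rw [angle, hc, hs, sq_sqrt (by positivity), ← hN] at hpolar
  rw [polarG, angle, ← hpolar]
  congr 1
  ext
  · ring
  · linear_combination (-t) * sin_sq_add_cos_sq θ

lemma hasDerivAt_angle (h : r + t * sin θ ≠ 0) :
    HasDerivAt (angle r θ) (r * cos θ / sqNorm r θ t) t := by
  have hu := ((hasDerivAt_id' t).mul_const (cos θ)).fun_div
    (((hasDerivAt_id' t).mul_const (sin θ)).const_add r) h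
  refine (hu.arctan.const_add θ).congr_deriv ?_
  have := sqNorm_pos h
  rw [sqNorm_eq] at this ⊢
  field_simp
  ring

lemma hasDerivAt_sqNorm : HasDerivAt (sqNorm r θ) (2 * (r * sin θ + t)) t := by
  have := ((((hasDerivAt_id' t).const_mul (2 * r)).mul_const (sin θ)).const_add (r ^ 2)).fun_add
    ((hasDerivAt_id' t).fun_pow 2)
  refine this.congr_deriv ?_
  simp only [mul_one, Nat.cast_ofNat, Nat.add_one_sub_one, pow_one]
  ring

lemma hasDerivAt_polarG (hv : Differentiable ℝ v) (hv0 : ∀ x, v x ≠ 0) (h : r + t * sin θ ≠ 0) :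
    HasDerivAt (polarG v r θ)
      (2 * (r * sin θ + t) / v (angle r θ t) ^ 2
        - 2 * (r * cos θ) * deriv v (angle r θ t) / v (angle r θ t) ^ 3) t := by
  have hV := ((hv _).hasDerivAt.comp t (hasDerivAt_angle h)).fun_pow 2
  refine (hasDerivAt_sqNorm.fun_div hV (pow_ne_zero 2 (hv0 _))).congr_deriv ?_
  have := sqNorm_pos h
  have := hv0 (angle r θ t)
  simp only [Function.comp]
  field_simp
  ring

lemma deriv_deriv_polarG (hv : ContDiff ℝ 2 v) (hv0 : ∀ x, v x ≠ 0) (hr : r ≠ 0) :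
    deriv (deriv (polarG v r θ)) 0 =
      2 / v θ ^ 2 * (1 - sin (2 * θ) * (deriv v θ / v θ)
        + cos θ ^ 2 * (3 * deriv v θ ^ 2 / v θ ^ 2 - deriv (deriv v) θ / v θ)) := by
  have hd := hv.differentiable two_ne_zero
  have hev : deriv (polarG v r θ) =ᶠ[𝓝 0] fun t =>
      2 * (r * sin θ + t) / v (angle r θ t) ^ 2
        - 2 * (r * cos θ) * deriv v (angle r θ t) / v (angle r θ t) ^ 3 := by
    have hcont : Continuous fun t => r + t * sin θ := by fun_prop
    filter_upwards [hcont.continuousAt.eventually_ne (by simpa using hr)] with t ht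
    exact (hasDerivAt_polarG hd hv0 ht).deriv
  have hη := hasDerivAt_angle (r := r) (θ := θ) (t := 0) (by simpa using hr)
  have hA : HasDerivAt (fun t => 2 * (r * sin θ + t)) 2 0 := by
    simpa using ((hasDerivAt_id' (0 : ℝ)).const_add (r * sin θ)).const_mul 2
  have hV := (hd _).hasDerivAt.comp 0 hη
  have hV' := (hv.differentiable_deriv_two _).hasDerivAt.comp 0 hη
  have h2 := (hA.fun_div (hV.fun_pow 2) (pow_ne_zero 2 (hv0 _))).fun_sub
    ((hV'.const_mul (2 * (r * cos θ))).fun_div (hV.fun_pow 3) (pow_ne_zero 3 (hv0 _)))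
  have h0 : angle r θ 0 = θ := by simp [angle]
  simp only [Function.comp, h0, sqNorm] at h2
  rw [hev.deriv_eq, h2.deriv, sin_two_mul]
  have := hv0 θ
  field_simp
  ring

end VerticalLine

theorem fundTensor_e2_e2_general
    (v : ℝ → ℝ) (hv : ContDiff ℝ 2 v)
    (hpos : ∀ θ, 0 < v θ) (G : ℝ × ℝ → ℝ)
    (hG : ∀ r θ : ℝ, 0 < r → G (r * Real.cos θ, r * Real.sin θ) = r ^ 2 / (v θ) ^ 2) :
    ∀ r θ : ℝ, 0 < r →
      fundTensor G (r * Real.cos θ, r * Real.sin θ) (0, 1) (0, 1) =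
        (1 / (v θ) ^ 2) *
          (1 - Real.sin (2 * θ) * (deriv v θ / v θ)
            + Real.cos θ ^ 2 *
                (3 * (deriv v θ) ^ 2 / (v θ) ^ 2 - deriv (deriv v) θ / v θ)) := by
  intro r θ hr
  have hline : (fun t : ℝ => G ((r * cos θ, r * sin θ) + t • (0, 1))) =ᶠ[𝓝 0]
      VerticalLine.polarG v r θ := by
    have hcont : Continuous fun t => r + t * sin θ := by fun_prop
    filter_upwards [hcont.continuousAt.eventually_const_lt (by simpa using hr)] with t ht
    simpa using VerticalLine.apply_eq_polarG hG ht
  rw [fundTensor_self, hline.deriv.deriv_eq,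
    VerticalLine.deriv_deriv_polarG hv (fun x => (hpos x).ne') hr.ne']
  ring

/-- In Cartesian coordinates,
`g_w(e₂,e₂) = (1/v²)(1 − sin(2θ) v'/v + cos²θ (3 v'²/v² − v''/v))`. -/
theorem fundTensor_e2_e2
    (v : ℝ → ℝ) (hv : ContDiff ℝ 2 v) (hper : ∀ θ, v (θ + 2 * Real.pi) = v θ)
    (hpos : ∀ θ, 0 < v θ) (G : ℝ × ℝ → ℝ)
    (hG : ∀ r θ : ℝ, 0 < r → G (r * Real.cos θ, r * Real.sin θ) = r ^ 2 / (v θ) ^ 2)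
    (hG0 : G 0 = 0) :
    ∀ r θ : ℝ, 0 < r →
      fundTensor G (r * Real.cos θ, r * Real.sin θ) (0, 1) (0, 1) =
        (1 / (v θ) ^ 2) *
          (1 - Real.sin (2 * θ) * (deriv v θ / v θ)
            + Real.cos θ ^ 2 *
                (3 * (deriv v θ) ^ 2 / (v θ) ^ 2 - deriv (deriv v) θ / v θ)) :=
  fundTensor_e2_e2_general v hv hpos G hG
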